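/- arXiv:2012.15508 — 12 statements merged into one kernel-verified Lean document; each statement's English description precedes it below -/
import Mathlib

section
/- Let 𝓕 be the Fibonacci type polynomial sequence with parameters a, c, d. Then for every natural number n ≥ 1, the Cassini identity holds: 𝓕_n² − 𝓕_{n+1}·𝓕_{n-1} = a²·(−d)^{n−1} as polynomials in ℝ[x]. -/
open Polynomial

theorem fib_type_Cassini (a : ℝ) (ha : a ≠ 0) (c d : ℝ[X]) (hc : c ≠ 0) (hd : d ≠ 0)
    (F : ℕ → ℝ[X]) (hF0 : F 0 = 0) (hF1 : F 1 = C a)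
    (hFrec : ∀ n, 2 ≤ n → F n = c * F (n - 1) + d * F (n - 2)) :
    ∀ n : ℕ, 1 ≤ n →
      F n ^ 2 - F (n + 1) * F (n - 1) = C (a ^ 2) * (-d) ^ (n - 1) := by
  intro n hn
  induction n with
  | zero => omega
  | succ m ih =>
    rcases Nat.eq_or_lt_of_le hn with h | h
    · -- m = 0
      have hm : m = 0 := by omega
      subst hm
      have h2 : F 2 = c * F 1 + d * F 0 := hFrec 2 (by norm_num)
      simp [hF0, hF1, h2, sq, mul_comm]
    · have hm : 1 ≤ m := by omega
      have ih' := ih hm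
      have hrec : F (m + 2) = c * F (m + 1) + d * F m := by
        have := hFrec (m + 2) (by omega)
        simpa using this
      have hrec1 : F (m + 1) = c * F m + d * F (m - 1) := by
        have := hFrec (m + 1) (by omega)
        have e1 : m + 1 - 1 = m := by omega
        have e2 : m + 1 - 2 = m - 1 := by omega
        rwa [e1, e2] at this
      have key : F (m + 1) ^ 2 - F (m + 2) * F m
          = (-d) * (F m ^ 2 - F (m + 1) * F (m - 1)) := by
        rw [hrec, hrec1]; ring
      have em : m + 1 - 1 = m := by omega
      have em2 : m - 1 + 1 = m := by omega
      rw [em, key, ih']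
      conv_rhs => rw [← em2, pow_succ]
      ring
end

section
/- Let 𝓕 be the Fibonacci type polynomial sequence with parameters a, c, d. Then for all natural numbers n, m ≥ 1, the Honsberger formula holds: a·𝓕_{n+m} = 𝓕_n·𝓕_{m+1} + d·𝓕_{n-1}·𝓕_m as polynomials in ℝ[x]. -/
open Polynomial

theorem fib_type_Honsberger (a : ℝ) (ha : a ≠ 0) (c d : ℝ[X]) (hc : c ≠ 0) (hd : d ≠ 0)
    (F : ℕ → ℝ[X]) (hF0 : F 0 = 0) (hF1 : F 1 = C a)
    (hFrec : ∀ n, 2 ≤ n → F n = c * F (n - 1) + d * F (n - 2)) :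
    ∀ n m : ℕ, 1 ≤ n → 1 ≤ m →
      C a * F (n + m) = F n * F (m + 1) + d * F (n - 1) * F m := by
  have key : ∀ k, 1 ≤ k → F (k + 1) = c * F k + d * F (k - 1) := by
    intro k hk
    have h := hFrec (k + 1) (by omega)
    simpa [Nat.add_sub_cancel, show k + 1 - 2 = k - 1 from by omega] using h
  have hF2 : F 2 = c * C a := by
    have h := key 1 le_rfl
    simpa [hF0, hF1] using h
  intro n m hn hm
  have main : ∀ m, 1 ≤ m →
      (C a * F (n + m) = F n * F (m + 1) + d * F (n - 1) * F m) ∧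
      (C a * F (n + m + 1) = F n * F (m + 2) + d * F (n - 1) * F (m + 1)) := by
    intro m hm
    induction m, hm using Nat.le_induction with
    | base =>
      have h1 : F (n + 1) = c * F n + d * F (n - 1) := key n hn
      have h2 : F (n + 2) = c * F (n + 1) + d * F n := by
        simpa using key (n + 1) (by omega)
      have h3 : F 3 = c * F 2 + d * F 1 := by simpa using key 2 (by norm_num)
      constructor
      · rw [h1, hF2, hF1]; ring
      · rw [h2, h1, h3, hF2, hF1]; ring
    | succ m hm ih =>
      refine ⟨ih.2, ?_⟩
      have hA : F (n + m + 2) = c * F (n + m + 1) + d * F (n + m) := by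
        simpa using key (n + m + 1) (by omega)
      have hB : F (m + 3) = c * F (m + 2) + d * F (m + 1) := by
        simpa using key (m + 2) (by omega)
      have hC : F (m + 2) = c * F (m + 1) + d * F m := by
        simpa using key (m + 1) (by omega)
      calc C a * F (n + m + 1 + 1)
          = c * (C a * F (n + m + 1)) + d * (C a * F (n + m)) := by
            rw [show n + m + 1 + 1 = n + m + 2 from rfl, hA]; ring
        _ = c * (F n * F (m + 2) + d * F (n - 1) * F (m + 1)) +
              d * (F n * F (m + 1) + d * F (n - 1) * F m) := by rw [ih.1, ih.2]
        _ = F n * F (m + 1 + 2) + d * F (n - 1) * F (m + 1 + 1) := by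
            rw [show m + 1 + 2 = m + 3 from rfl, hB, hC]; ring
  exact (main m hm).1
end

section
/- Let 𝓕 be the Fibonacci type polynomial sequence with parameters a, c, d. Then for every natural number n ≥ 1, one has a·𝓕_{2n−1} = 𝓕_n² + d·𝓕_{n−1}² as polynomials in ℝ[x]. -/
open Polynomial

theorem fib_type_odd_index (a : ℝ) (ha : a ≠ 0) (c d : ℝ[X]) (hc : c ≠ 0) (hd : d ≠ 0)
    (F : ℕ → ℝ[X]) (hF0 : F 0 = 0) (hF1 : F 1 = C a)
    (hFrec : ∀ n, 2 ≤ n → F n = c * F (n - 1) + d * F (n - 2)) :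
    ∀ n : ℕ, 1 ≤ n →
      C a * F (2 * n - 1) = F n ^ 2 + d * F (n - 1) ^ 2 := by
  have hrec : ∀ m : ℕ, F (m + 2) = c * F (m + 1) + d * F m := by
    intro m
    have := hFrec (m + 2) (by omega)
    simpa using this
  have key : ∀ m n : ℕ, C a * F (m + n + 1) = F (m + 1) * F (n + 1) + d * F m * F n := by
    intro m
    induction m using Nat.twoStepInduction with
    | zero => intro n; simp [hF0, hF1]
    | one =>
      intro n
      have h2 : F 2 = c * C a := by simpa [hF1, hF0] using hrec 0
      have := hrec n
      rw [show (1 + n + 1) = n + 2 by ring, this, h2, hF1]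
      ring
    | more m ih1 ih2 =>
      intro n
      have A := ih1 n
      have B := ih2 n
      rw [show m + 1 + n + 1 = (m + n + 1) + 1 by ring] at B
      rw [show m + 2 + n + 1 = (m + n + 1) + 2 by ring, hrec (m + n + 1),
        show m + 2 + 1 = (m + 1) + 2 from rfl, hrec (m + 1), hrec m]
      have h2 : F (m + 1 + 1) = c * F (m + 1) + d * F m := hrec m
      rw [h2] at B
      linear_combination c * B + d * A
  intro n hn
  obtain ⟨k, rfl⟩ : ∃ k, n = k + 1 := ⟨n - 1, by omega⟩
  have := key k k
  rw [show 2 * (k + 1) - 1 = k + k + 1 by omega, this]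
  simp
  ring
end

section
/- Let 𝓕 be the Fibonacci type polynomial sequence with parameters a, c, d, and suppose d(x) ≠ 0 for every real number x. Then for all natural numbers n ≥ m with n, m ≥ 1, the d'Ocagne identity holds: a·(−d)^m·𝓕_{n−m} = 𝓕_n·𝓕_{m+1} − 𝓕_{n+1}·𝓕_m as polynomials in ℝ[x]. -/
open Polynomial

theorem fib_type_dOcagne (a : ℝ) (ha : a ≠ 0) (c d : ℝ[X]) (hc : c ≠ 0) (hd : d ≠ 0)
    (hdx : ∀ x : ℝ, d.eval x ≠ 0)
    (F : ℕ → ℝ[X]) (hF0 : F 0 = 0) (hF1 : F 1 = C a)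
    (hFrec : ∀ n, 2 ≤ n → F n = c * F (n - 1) + d * F (n - 2)) :
    ∀ n m : ℕ, 1 ≤ n → 1 ≤ m → m ≤ n →
      C a * (-d) ^ m * F (n - m) = F n * F (m + 1) - F (n + 1) * F m := by
  intro n m
  induction m generalizing n with
  | zero => intro _ hm _; omega
  | succ m ih =>
    intro hn _ hmn
    rcases Nat.eq_zero_or_pos m with h0 | hpos
    · subst h0
      obtain ⟨k, rfl⟩ : ∃ k, n = k + 1 := ⟨n - 1, by omega⟩
      have h2 : F 2 = c * F 1 + d * F 0 := by
        have := hFrec 2 le_rfl; norm_num at this; exact this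
      have h3 : F (k + 2) = c * F (k + 1) + d * F k := by
        have := hFrec (k + 2) (by omega); norm_num at this; exact this
      simp only [Nat.add_sub_cancel]
      rw [show k + 1 + 1 = k + 2 from rfl, h2, h3, hF0, hF1]
      ring
    · obtain ⟨k, rfl⟩ : ∃ k, n = k + 1 := ⟨n - 1, by omega⟩
      have hik := ih k (by omega) hpos (by omega)
      have h3 : F (k + 2) = c * F (k + 1) + d * F k := by
        have := hFrec (k + 2) (by omega); norm_num at this; exact this
      have h4 : F (m + 2) = c * F (m + 1) + d * F m := by
        have := hFrec (m + 2) (by omega); norm_num at this; exact this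
      have hsub : k + 1 - (m + 1) = k - m := by omega
      rw [hsub, show k + 1 + 1 = k + 2 from rfl, show m + 1 + 1 = m + 2 from rfl, h3, h4]
      have he : C a * (-d) ^ (m + 1) * F (k - m) = -d * (C a * (-d) ^ m * F (k - m)) := by
        ring
      rw [he, hik]; ring
end

section
/- Let 𝓕 be the Fibonacci type polynomial sequence with parameters a, c, d. Then for all natural numbers n and p ≥ 1, one has 𝓕_{2n+p} = Σ_{j=0}^{n} (n choose j)·c^j·d^{n−j}·𝓕_{j+p} as polynomials in ℝ[x]. -/
open Polynomial

theorem fib_type_series (a : ℝ) (ha : a ≠ 0) (c d : ℝ[X]) (hc : c ≠ 0) (hd : d ≠ 0)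
    (F : ℕ → ℝ[X]) (hF0 : F 0 = 0) (hF1 : F 1 = C a)
    (hFrec : ∀ n, 2 ≤ n → F n = c * F (n - 1) + d * F (n - 2)) :
    ∀ n p : ℕ, 1 ≤ p →
      F (2 * n + p) =
        ∑ j ∈ Finset.range (n + 1), (n.choose j : ℝ[X]) * c ^ j * d ^ (n - j) * F (j + p) := by
  intro n
  induction n with
  | zero => intro p hp; simp
  | succ n ih =>
    intro p hp
    have h2 : 2 * (n + 1) + p = 2 * n + (p + 2) := by ring
    rw [h2, ih (p + 2) (by omega)]
    have hrec : ∀ j : ℕ, F (j + (p + 2)) = c * F (j + p + 1) + d * F (j + p) := by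
      intro j
      have h := hFrec (j + (p + 2)) (by omega)
      rw [show j + (p + 2) - 1 = j + p + 1 by omega,
        show j + (p + 2) - 2 = j + p by omega] at h
      exact h
    calc
      ∑ j ∈ Finset.range (n + 1), (n.choose j : ℝ[X]) * c ^ j * d ^ (n - j) * F (j + (p + 2))
          = ∑ j ∈ Finset.range (n + 1),
            ((n.choose j : ℝ[X]) * c ^ (j + 1) * d ^ (n - j) * F (j + p + 1)
              + (n.choose j : ℝ[X]) * c ^ j * d ^ (n - j + 1) * F (j + p)) := by
        refine Finset.sum_congr rfl fun j hj => ?_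
        rw [hrec j]
        ring
      _ = (∑ j ∈ Finset.range (n + 1),
            (n.choose j : ℝ[X]) * c ^ (j + 1) * d ^ (n - j) * F (j + p + 1))
          + ∑ j ∈ Finset.range (n + 1),
            (n.choose j : ℝ[X]) * c ^ j * d ^ (n - j + 1) * F (j + p) := by
        rw [Finset.sum_add_distrib]
      _ = ∑ j ∈ Finset.range (n + 1 + 1),
            ((n + 1).choose j : ℝ[X]) * c ^ j * d ^ (n + 1 - j) * F (j + p) := by
        rw [Finset.sum_range_succ'
          (fun j => ((n + 1).choose j : ℝ[X]) * c ^ j * d ^ (n + 1 - j) * F (j + p))]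
        have hpascal : ∀ i ∈ Finset.range (n + 1),
            (((n + 1).choose (i + 1) : ℝ[X])) * c ^ (i + 1) * d ^ (n + 1 - (i + 1)) * F (i + 1 + p)
            = (n.choose i : ℝ[X]) * c ^ (i + 1) * d ^ (n - i) * F (i + p + 1)
              + (n.choose (i + 1) : ℝ[X]) * c ^ (i + 1) * d ^ (n - i) * F (i + p + 1) := by
          intro i hi
          rw [Nat.choose_succ_succ]
          push_cast
          simp only [Nat.succ_eq_add_one, show n + 1 - (i + 1) = n - i from by omega,
            show i + 1 + p = i + p + 1 from by omega]
          ring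
        rw [Finset.sum_congr rfl hpascal, Finset.sum_add_distrib]
        have hsplit : ∑ j ∈ Finset.range (n + 1),
            (n.choose j : ℝ[X]) * c ^ j * d ^ (n - j + 1) * F (j + p)
            = (∑ i ∈ Finset.range n,
                (n.choose (i + 1) : ℝ[X]) * c ^ (i + 1) * d ^ (n - (i + 1) + 1) * F (i + 1 + p))
              + (n.choose 0 : ℝ[X]) * c ^ 0 * d ^ (n - 0 + 1) * F (0 + p) := by
          exact Finset.sum_range_succ'
            (fun j => (n.choose j : ℝ[X]) * c ^ j * d ^ (n - j + 1) * F (j + p)) n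
        rw [hsplit]
        have hlast : ∑ i ∈ Finset.range (n + 1),
            (n.choose (i + 1) : ℝ[X]) * c ^ (i + 1) * d ^ (n - i) * F (i + p + 1)
            = ∑ i ∈ Finset.range n,
              (n.choose (i + 1) : ℝ[X]) * c ^ (i + 1) * d ^ (n - (i + 1) + 1) * F (i + 1 + p) := by
          rw [Finset.sum_range_succ, Nat.choose_succ_self]
          push_cast
          rw [zero_mul, zero_mul, zero_mul, add_zero]
          refine Finset.sum_congr rfl fun i hi => ?_
          simp only [Finset.mem_range] at hi
          rw [show n - (i + 1) + 1 = n - i by omega, show i + 1 + p = i + p + 1 by omega]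
        rw [hlast]
        simp only [Nat.choose_zero_right, Nat.sub_zero, pow_zero, Nat.cast_one, one_mul, mul_one,
          zero_add]
        ring
end

section
/- Let 𝓕 and 𝓛 be the Fibonacci type and Lucas type polynomial sequences with the same parameters c, d and with 𝓛_0 = 𝓕_1 = a. Then for every natural number n ≥ 1, one has a·𝓛_n = b·𝓕_n + a·d·𝓕_{n−1} as polynomials in ℝ[x]. -/
open Polynomial

theorem lucas_fib_relation (a : ℝ) (ha : a ≠ 0) (b c d : ℝ[X]) (hb : b ≠ 0) (hc : c ≠ 0)
    (hd : d ≠ 0)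
    (F : ℕ → ℝ[X]) (hF0 : F 0 = 0) (hF1 : F 1 = C a)
    (hFrec : ∀ n, 2 ≤ n → F n = c * F (n - 1) + d * F (n - 2))
    (L : ℕ → ℝ[X]) (hL0 : L 0 = C a) (hL1 : L 1 = b)
    (hLrec : ∀ n, 2 ≤ n → L n = c * L (n - 1) + d * L (n - 2)) :
    ∀ n : ℕ, 1 ≤ n →
      C a * L n = b * F n + C a * d * F (n - 1) := by
  intro n
  induction n using Nat.strong_induction_on with
  | _ n ih =>
    intro hn
    match n, hn with
    | 1, _ => simp [hL1, hF1, hF0]; ring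
    | 2, _ =>
      rw [hLrec 2 le_rfl, hFrec 2 le_rfl]
      simp only [show (2:ℕ) - 1 = 1 from rfl, show (2:ℕ) - 2 = 0 from rfl,
        hL1, hL0, hF1, hF0]
      ring
    | (m+3), _ =>
      have h1 := ih (m+2) (by omega) (by omega)
      have h2 := ih (m+1) (by omega) (by omega)
      have h3 := hFrec (m+2) (by omega)
      rw [hLrec (m+3) (by omega), hFrec (m+3) (by omega)]
      simp only [show m+3-1 = m+2 from rfl, show m+3-2 = m+1 from rfl,
        show m+2-1 = m+1 from rfl, show m+2-2 = m from rfl, show m+1-1 = m from rfl] at *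
      linear_combination c * h1 + d * h2 - C a * d * h3
end

section
/- Let 𝓕 and 𝓛 be the Fibonacci type and Lucas type polynomial sequences with the same parameters c, d and with 𝓛_0 = 𝓕_1 = a. Then for every natural number n ≥ 2, one has a·𝓛_n = (b·c + a·d)·𝓕_{n−1} + b·d·𝓕_{n−2} as polynomials in ℝ[x]. -/
open Polynomial

theorem lucas_fib_relation' (a : ℝ) (ha : a ≠ 0) (b c d : ℝ[X]) (hb : b ≠ 0) (hc : c ≠ 0)
    (hd : d ≠ 0)
    (F : ℕ → ℝ[X]) (hF0 : F 0 = 0) (hF1 : F 1 = C a)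
    (hFrec : ∀ n, 2 ≤ n → F n = c * F (n - 1) + d * F (n - 2))
    (L : ℕ → ℝ[X]) (hL0 : L 0 = C a) (hL1 : L 1 = b)
    (hLrec : ∀ n, 2 ≤ n → L n = c * L (n - 1) + d * L (n - 2)) :
    ∀ n : ℕ, 2 ≤ n →
      C a * L n = (b * c + C a * d) * F (n - 1) + b * d * F (n - 2) := by
  have aux : ∀ n, 1 ≤ n → C a * L n = b * F n + C a * d * F (n - 1) := by
    intro n
    induction n using Nat.strong_induction_on with
    | _ n ih =>
      intro hn
      match n, hn with
      | 1, _ => simp [hL1, hF1, hF0]; ring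
      | 2, _ =>
        have hL := hLrec 2 (by norm_num)
        have hF := hFrec 2 (by norm_num)
        norm_num at hL hF
        rw [hL, hF, hL0, hL1, hF0, hF1]
        ring
      | (m+3), _ =>
        have h1 := ih (m+2) (by omega) (by omega)
        have h2 := ih (m+1) (by omega) (by omega)
        have hL := hLrec (m+3) (by omega)
        have hF3 := hFrec (m+3) (by omega)
        have hF2 := hFrec (m+2) (by omega)
        simp only [Nat.add_sub_cancel, show m+3-1 = m+2 from rfl,
          show m+3-2 = m+1 from rfl, show m+2-1 = m+1 from rfl,
          show m+2-2 = m from rfl, show m+1-1 = m from rfl] at *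
        rw [hL, hF3, hF2]
        rw [hF2] at h1
        linear_combination c * h1 + d * h2
  intro n hn
  have h1 : 1 ≤ n := by omega
  have := aux n h1
  rw [this, hFrec n hn]
  ring
end

section
/- Let 𝓕 and 𝓛 be the Fibonacci type and Lucas type polynomial sequences with the same parameters c, d and with 𝓛_0 = 𝓕_1 = a. Then for every natural number n ≥ 1, the 2×2 matrix [[𝓛_{n+2}, 𝓛_{n+1}], [𝓛_{n+1}, 𝓛_n]] over ℝ[x] equals the product of the matrix [[(b·c + a·d)/a, b·d/a], [b/a, d]] with the matrix [[𝓕_{n+1}, 𝓕_n], [𝓕_n, 𝓕_{n−1}]]. -/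
open Polynomial Matrix

theorem lucas_fib_matrix (a : ℝ) (ha : a ≠ 0) (b c d : ℝ[X]) (hb : b ≠ 0) (hc : c ≠ 0)
    (hd : d ≠ 0)
    (F : ℕ → ℝ[X]) (hF0 : F 0 = 0) (hF1 : F 1 = C a)
    (hFrec : ∀ n, 2 ≤ n → F n = c * F (n - 1) + d * F (n - 2))
    (L : ℕ → ℝ[X]) (hL0 : L 0 = C a) (hL1 : L 1 = b)
    (hLrec : ∀ n, 2 ≤ n → L n = c * L (n - 1) + d * L (n - 2)) :
    ∀ n : ℕ, 1 ≤ n →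
      (!![L (n + 2), L (n + 1); L (n + 1), L n]) =
        (!![C (1 / a) * (b * c + C a * d), C (1 / a) * (b * d); C (1 / a) * b, d]) *
          (!![F (n + 1), F n; F n, F (n - 1)]) := by
  have hCa : (C a : ℝ[X]) ≠ 0 := by simpa using ha
  have h1 : C a * C (1 / a) = (1 : ℝ[X]) := by
    rw [← C_mul, mul_one_div_cancel ha, C_1]
  -- key identity: a * L (n+1) = b * F (n+1) + a * d * F n, two consecutive terms
  have key : ∀ n : ℕ, C a * L (n + 1) = b * F (n + 1) + C a * d * F n ∧
      C a * L (n + 2) = b * F (n + 2) + C a * d * F (n + 1) := by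
    intro n
    induction n with
    | zero =>
      have hF2 : F 2 = c * F 1 + d * F 0 := hFrec 2 (by norm_num)
      have hL2 : L 2 = c * L 1 + d * L 0 := hLrec 2 (by norm_num)
      constructor
      · rw [hL1, hF1, hF0]; ring
      · rw [hL2, hF2, hL1, hL0, hF1, hF0]; ring
    | succ k ih =>
      refine ⟨ih.2, ?_⟩
      have hF3 : F (k + 3) = c * F (k + 2) + d * F (k + 1) := by
        have := hFrec (k + 3) (by omega)
        simpa using this
      have hF2 : F (k + 2) = c * F (k + 1) + d * F k := by
        have := hFrec (k + 2) (by omega)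
        simpa using this
      have hL3 : L (k + 3) = c * L (k + 2) + d * L (k + 1) := by
        have := hLrec (k + 3) (by omega)
        simpa using this
      have := ih.1
      have := ih.2
      rw [hL3, hF3]
      linear_combination c * ih.2 + d * ih.1 - C a * d * hF2
  intro n hn
  obtain ⟨m, rfl⟩ : ∃ m, n = m + 1 := ⟨n - 1, by omega⟩
  have k1 := (key m).1
  have k2 := (key m).2
  have hF2 : F (m + 2) = c * F (m + 1) + d * F m := by
    have := hFrec (m + 2) (by omega)
    simpa using this
  have hL3 : L (m + 3) = c * L (m + 2) + d * L (m + 1) := by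
    have := hLrec (m + 3) (by omega)
    simpa using this
  have cancel : ∀ p q : ℝ[X], C a * p = C a * q → p = q := fun p q h =>
    mul_left_cancel₀ hCa h
  rw [Matrix.mul_fin_two]
  simp only [Nat.add_sub_cancel]
  refine Matrix.ext fun i j => ?_
  fin_cases i <;> fin_cases j <;>
    simp only [Matrix.cons_val_zero, Matrix.cons_val_one, Matrix.head_cons, Matrix.of_apply,
      Matrix.cons_val', Matrix.head_fin_const, Matrix.empty_val', Matrix.cons_val_fin_one]
  · -- L (m+3)
    apply cancel
    rw [hL3]
    calc C a * (c * L (m + 2) + d * L (m + 1))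
        = c * (C a * L (m + 2)) + d * (C a * L (m + 1)) := by ring
      _ = c * (b * F (m + 2) + C a * d * F (m + 1))
            + d * (b * F (m + 1) + C a * d * F m) := by rw [k1, k2]
      _ = b * c * F (m + 2) + C a * d * (c * F (m + 1) + d * F m) + b * d * F (m + 1) := by ring
      _ = b * c * F (m + 2) + C a * d * F (m + 2) + b * d * F (m + 1) := by rw [← hF2]
      _ = C a * (C (1 / a) * (b * c + C a * d) * F (m + 2) + C (1 / a) * (b * d) * F (m + 1)) := by
          calc b * c * F (m + 2) + C a * d * F (m + 2) + b * d * F (m + 1)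
              = (C a * C (1 / a)) * ((b * c + C a * d) * F (m + 2) + b * d * F (m + 1)) := by
                rw [h1]; ring
            _ = _ := by ring
  · -- L (m+2)
    apply cancel
    calc C a * L (m + 2)
        = b * F (m + 2) + C a * d * F (m + 1) := k2
      _ = b * (c * F (m + 1) + d * F m) + C a * d * F (m + 1) := by rw [hF2]
      _ = (C a * C (1 / a)) * ((b * c + C a * d) * F (m + 1) + b * d * F m) := by rw [h1]; ring
      _ = C a * (C (1 / a) * (b * c + C a * d) * F (m + 1) + C (1 / a) * (b * d) * F m) := by ring
  · -- L (m+2) bottom left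
    apply cancel
    calc C a * L (m + 2)
        = b * F (m + 2) + C a * d * F (m + 1) := k2
      _ = (C a * C (1 / a)) * (b * F (m + 2)) + C a * (d * F (m + 1)) := by rw [h1]; ring
      _ = C a * (C (1 / a) * b * F (m + 2) + d * F (m + 1)) := by ring
  · -- L (m+1)
    apply cancel
    calc C a * L (m + 1)
        = b * F (m + 1) + C a * d * F m := k1
      _ = (C a * C (1 / a)) * (b * F (m + 1)) + C a * (d * F m) := by rw [h1]; ring
      _ = C a * (C (1 / a) * b * F (m + 1) + d * F m) := by ring
end

section
/- Let 𝓛 be the Lucas type polynomial sequence with parameters a, b, c, d. Then for all natural numbers n and p, one has 𝓛_{2n+p} = Σ_{j=0}^{n} (n choose j)·c^j·d^{n−j}·𝓛_{p+j} as polynomials in ℝ[x]. -/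
open Polynomial

theorem lucas_type_series (a : ℝ) (ha : a ≠ 0) (b c d : ℝ[X]) (hb : b ≠ 0) (hc : c ≠ 0)
    (hd : d ≠ 0)
    (L : ℕ → ℝ[X]) (hL0 : L 0 = C a) (hL1 : L 1 = b)
    (hLrec : ∀ n, 2 ≤ n → L n = c * L (n - 1) + d * L (n - 2)) :
    ∀ n p : ℕ,
      L (2 * n + p) =
        ∑ j ∈ Finset.range (n + 1), (n.choose j : ℝ[X]) * c ^ j * d ^ (n - j) * L (p + j) := by
  have key : ∀ k, L (k + 2) = c * L (k + 1) + d * L k := by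
    intro k
    have h := hLrec (k + 2) (by omega)
    simpa [show k + 2 - 1 = k + 1 by omega, show k + 2 - 2 = k by omega] using h
  intro n
  induction n with
  | zero => intro p; simp
  | succ n ih =>
    intro p
    have h1 : 2 * (n + 1) + p = 2 * n + (p + 2) := by ring
    rw [h1, ih (p + 2)]
    have hsplit : ∀ j, L (p + 2 + j) = c * L (p + 1 + j) + d * L (p + j) := by
      intro j
      have h := key (p + j)
      rw [show p + 2 + j = p + j + 2 by ring, show p + 1 + j = p + j + 1 by ring]
      exact h
    calc
      ∑ j ∈ Finset.range (n + 1), (n.choose j : ℝ[X]) * c ^ j * d ^ (n - j) * L (p + 2 + j)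
          = ∑ j ∈ Finset.range (n + 1),
              ((n.choose j : ℝ[X]) * c ^ (j + 1) * d ^ (n - j) * L (p + 1 + j)
                + (n.choose j : ℝ[X]) * c ^ j * d ^ (n - j + 1) * L (p + j)) := by
            refine Finset.sum_congr rfl fun j _ => ?_
            rw [hsplit j]; ring
      _ = (∑ j ∈ Finset.range (n + 1),
              (n.choose j : ℝ[X]) * c ^ (j + 1) * d ^ (n - j) * L (p + 1 + j))
          + ∑ j ∈ Finset.range (n + 1),
              (n.choose j : ℝ[X]) * c ^ j * d ^ (n - j + 1) * L (p + j) :=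
            Finset.sum_add_distrib
      _ = ∑ j ∈ Finset.range (n + 1 + 1),
              ((n + 1).choose j : ℝ[X]) * c ^ j * d ^ (n + 1 - j) * L (p + j) := by
            rw [Finset.sum_range_succ' (fun j =>
              ((n + 1).choose j : ℝ[X]) * c ^ j * d ^ (n + 1 - j) * L (p + j)) (n + 1)]
            have hterm : ∀ j ∈ Finset.range (n + 1),
                (((n + 1).choose (j + 1) : ℝ[X]) * c ^ (j + 1) * d ^ (n + 1 - (j + 1))
                    * L (p + (j + 1)))
                  = (n.choose j : ℝ[X]) * c ^ (j + 1) * d ^ (n - j) * L (p + 1 + j)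
                    + (n.choose (j + 1) : ℝ[X]) * c ^ (j + 1) * d ^ (n - j) * L (p + (j + 1)) := by
              intro j _
              rw [Nat.choose_succ_succ, show n + 1 - (j + 1) = n - j by omega,
                show p + 1 + j = p + (j + 1) by ring]
              push_cast
              ring
            rw [Finset.sum_congr rfl hterm, Finset.sum_add_distrib]
            have hS1 : ∑ j ∈ Finset.range (n + 1),
                (n.choose j : ℝ[X]) * c ^ (j + 1) * d ^ (n - j) * L (p + 1 + j)
                = ∑ j ∈ Finset.range (n + 1),
                (n.choose j : ℝ[X]) * c ^ (j + 1) * d ^ (n - j) * L (p + 1 + j) := rfl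
            have hS2 : ∑ j ∈ Finset.range (n + 1),
                (n.choose j : ℝ[X]) * c ^ j * d ^ (n - j + 1) * L (p + j)
                = (∑ j ∈ Finset.range (n + 1),
                    (n.choose (j + 1) : ℝ[X]) * c ^ (j + 1) * d ^ (n - j) * L (p + (j + 1)))
                  + ((n + 1).choose 0 : ℝ[X]) * c ^ 0 * d ^ (n + 1 - 0) * L (p + 0) := by
              rw [Finset.sum_range_succ' (fun j =>
                (n.choose j : ℝ[X]) * c ^ j * d ^ (n - j + 1) * L (p + j)) n]
              rw [Finset.sum_range_succ (fun j =>
                (n.choose (j + 1) : ℝ[X]) * c ^ (j + 1) * d ^ (n - j) * L (p + (j + 1))) n]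
              simp only [Nat.choose_succ_self, Nat.cast_zero, zero_mul, add_zero,
                Nat.choose_zero_right, Nat.cast_one, one_mul, pow_zero, Nat.sub_zero,
                Nat.add_sub_cancel, Nat.sub_self, pow_one]
              congr 1
              · refine Finset.sum_congr rfl fun j hj => ?_
                simp only [Finset.mem_range] at hj
                rw [show n - (j + 1) + 1 = n - j by omega]
            rw [hS2]
            ring
end

section
/- Let 𝓕 and 𝓛 be the Fibonacci type and Lucas type polynomial sequences with the same parameters c, d and with 𝓛_0 = 𝓕_1 = a. Then for all natural numbers n and m ≥ 1, one has a·𝓛_{n+m} = 𝓛_{n+1}·𝓕_m + d·𝓛_n·𝓕_{m−1} as polynomials in ℝ[x]. -/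
open Polynomial

/-! Both sides of the identity, as functions of `m`, satisfy the common recurrence, so it suffices
to compare them at `m = 0` and `m = 1`. -/

section Semiring

variable {R : Type*} [Semiring R] (c d : R)

def IsSecondOrderSolution (u : ℕ → R) : Prop :=
  ∀ n, u (n + 2) = c * u (n + 1) + d * u n

variable {c d}

theorem IsSecondOrderSolution.of_ge_two {u : ℕ → R}
    (h : ∀ n, 2 ≤ n → u n = c * u (n - 1) + d * u (n - 2)) : IsSecondOrderSolution c d u :=
  fun n => by simpa using h (n + 2) (by omega)

theorem IsSecondOrderSolution.ext {u v : ℕ → R} (hu : IsSecondOrderSolution c d u)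
    (hv : IsSecondOrderSolution c d v) (h0 : u 0 = v 0) (h1 : u 1 = v 1) : u = v := by
  funext n
  induction n using Nat.twoStepInduction with
  | zero => exact h0
  | one => exact h1
  | more n ih0 ih1 => rw [hu, hv, ih0, ih1]

theorem IsSecondOrderSolution.shift {u : ℕ → R} (hu : IsSecondOrderSolution c d u) (k : ℕ) :
    IsSecondOrderSolution c d (fun n => u (n + k)) :=
  fun n => by simpa only [Nat.add_right_comm n _ k] using hu (n + k)

theorem IsSecondOrderSolution.add {u v : ℕ → R} (hu : IsSecondOrderSolution c d u)
    (hv : IsSecondOrderSolution c d v) : IsSecondOrderSolution c d (fun n => u n + v n) :=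
  fun n => by dsimp only; rw [hu, hv, mul_add, mul_add]; abel

end Semiring

section CommSemiring

variable {R : Type*} [CommSemiring R] {c d : R}

theorem IsSecondOrderSolution.const_mul {u : ℕ → R} (hu : IsSecondOrderSolution c d u) (r : R) :
    IsSecondOrderSolution c d (fun n => r * u n) :=
  fun n => by dsimp only; rw [hu]; ring

theorem IsSecondOrderSolution.honsberger {F L : ℕ → R} (hF : IsSecondOrderSolution c d F)
    (hL : IsSecondOrderSolution c d L) (hF0 : F 0 = 0) (n m : ℕ) :
    F 1 * L (n + m + 1) = L (n + 1) * F (m + 1) + d * L n * F m := by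
  have hleft : IsSecondOrderSolution c d (fun m => F 1 * L (m + (n + 1))) :=
    (hL.shift (n + 1)).const_mul (F 1)
  have hright : IsSecondOrderSolution c d (fun m => L (n + 1) * F (m + 1) + d * L n * F m) :=
    ((hF.shift 1).const_mul _).add (hF.const_mul _)
  have init0 : F 1 * L (n + 1) = L (n + 1) * F 1 + d * L n * F 0 := by
    rw [hF0]; ring
  have init1 : F 1 * L (n + 2) = L (n + 1) * F 2 + d * L n * F 1 := by
    rw [hL n, hF 0, hF0]; ring
  have key := congrFun (hleft.ext hright (by simpa using init0)
    (by simpa only [show 1 + (n + 1) = n + 2 by omega] using init1)) m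
  rwa [show m + (n + 1) = n + m + 1 by omega] at key

end CommSemiring

theorem lucas_fib_Honsberger_general (a : ℝ) (c d : ℝ[X])
    (F : ℕ → ℝ[X]) (hF0 : F 0 = 0) (hF1 : F 1 = C a)
    (hFrec : ∀ n, 2 ≤ n → F n = c * F (n - 1) + d * F (n - 2))
    (L : ℕ → ℝ[X])
    (hLrec : ∀ n, 2 ≤ n → L n = c * L (n - 1) + d * L (n - 2)) :
    ∀ n m : ℕ, 1 ≤ m →
      C a * L (n + m) = L (n + 1) * F m + d * L n * F (m - 1) := by
  intro n m hm
  obtain ⟨k, rfl⟩ := Nat.exists_eq_add_of_le' hm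
  rw [← hF1, Nat.add_sub_cancel]
  exact (IsSecondOrderSolution.of_ge_two hFrec).honsberger
    (IsSecondOrderSolution.of_ge_two hLrec) hF0 n k

theorem lucas_fib_Honsberger (a : ℝ) (ha : a ≠ 0) (b c d : ℝ[X]) (hb : b ≠ 0) (hc : c ≠ 0)
    (hd : d ≠ 0)
    (F : ℕ → ℝ[X]) (hF0 : F 0 = 0) (hF1 : F 1 = C a)
    (hFrec : ∀ n, 2 ≤ n → F n = c * F (n - 1) + d * F (n - 2))
    (L : ℕ → ℝ[X]) (hL0 : L 0 = C a) (hL1 : L 1 = b)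
    (hLrec : ∀ n, 2 ≤ n → L n = c * L (n - 1) + d * L (n - 2)) :
    ∀ n m : ℕ, 1 ≤ m →
      C a * L (n + m) = L (n + 1) * F m + d * L n * F (m - 1) :=
  lucas_fib_Honsberger_general a c d F hF0 hF1 hFrec L hLrec
end

section
/- Let 𝓕 and 𝓛 be the Fibonacci type and Lucas type polynomial sequences with the same parameters c, d and with 𝓛_0 = 𝓕_1 = a, and suppose d(x) ≠ 0 for every real number x. Then for all natural numbers n ≥ m, one has a·(−d)^m·𝓛_{n−m} = 𝓛_n·𝓕_{m+1} − 𝓛_{n+1}·𝓕_m as polynomials in ℝ[x]. -/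
open Polynomial

theorem lucas_fib_dOcagne (a : ℝ) (ha : a ≠ 0) (b c d : ℝ[X]) (hb : b ≠ 0) (hc : c ≠ 0)
    (hd : d ≠ 0) (hdx : ∀ x : ℝ, d.eval x ≠ 0)
    (F : ℕ → ℝ[X]) (hF0 : F 0 = 0) (hF1 : F 1 = C a)
    (hFrec : ∀ n, 2 ≤ n → F n = c * F (n - 1) + d * F (n - 2))
    (L : ℕ → ℝ[X]) (hL0 : L 0 = C a) (hL1 : L 1 = b)
    (hLrec : ∀ n, 2 ≤ n → L n = c * L (n - 1) + d * L (n - 2)) :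
    ∀ n m : ℕ, m ≤ n →
      C a * (-d) ^ m * L (n - m) = L n * F (m + 1) - L (n + 1) * F m := by
  have key : ∀ m n : ℕ, C a * (-d) ^ m * L n = L (n + m) * F (m + 1) - L (n + m + 1) * F m := by
    intro m
    induction m with
    | zero => intro n; simp [hF0, hF1]; ring
    | succ m ih =>
      intro n
      have hFr := hFrec (m + 2) (by omega)
      have hLr := hLrec (n + m + 2) (by omega)
      simp only [Nat.add_sub_cancel, show m + 2 - 1 = m + 1 from rfl,
        show m + 2 - 2 = m from rfl, show n + m + 2 - 1 = n + m + 1 from rfl,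
        show n + m + 2 - 2 = n + m from rfl] at hFr hLr
      have h := ih n
      show C a * (-d) ^ (m + 1) * L n = L (n + m + 1) * F (m + 2) - L (n + m + 2) * F (m + 1)
      linear_combination (-d) * h - L (n + m + 1) * hFr + F (m + 1) * hLr
  intro n m hmn
  have h := key m (n - m)
  have e : n - m + m = n := by omega
  rw [e] at h
  exact h
end

section
/- Let J and Λ be the Jacobsthal and Jacobsthal-Lucas polynomial sequences. Then for all natural numbers n ≥ m, one has (−2x)^m·Λ_{n−m} = Λ_n·J_{m+1} − Λ_{n+1}·J_m as polynomials in ℝ[x]. -/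
open Polynomial

theorem jacobsthal_lucas_dOcagne (J : ℕ → ℝ[X]) (hJ0 : J 0 = 0) (hJ1 : J 1 = 1)
    (hJrec : ∀ n, 2 ≤ n → J n = J (n - 1) + 2 * X * J (n - 2))
    (Λ : ℕ → ℝ[X]) (hΛ0 : Λ 0 = 1) (hΛ1 : Λ 1 = 1)
    (hΛrec : ∀ n, 2 ≤ n → Λ n = Λ (n - 1) + 2 * X * Λ (n - 2)) :
    ∀ n m : ℕ, m ≤ n →
      (-(2 * X)) ^ m * Λ (n - m) = Λ n * J (m + 1) - Λ (n + 1) * J m := by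
  intro n m
  induction m generalizing n with
  | zero => intro _; simp [hJ0, hJ1]
  | succ m ih =>
    intro h
    have hn1 : 1 ≤ n := le_trans (Nat.succ_le_succ (Nat.zero_le m)) h
    have hm : m ≤ n - 1 := by omega
    have key := ih (n - 1) hm
    rw [Nat.sub_add_cancel hn1] at key
    have hJ : J (m + 2) = J (m + 1) + 2 * X * J m := by
      have := hJrec (m + 2) (by omega)
      simpa using this
    have hL : Λ (n + 1) = Λ n + 2 * X * Λ (n - 1) := by
      have := hΛrec (n + 1) (by omega)
      have e1 : n + 1 - 1 = n := by omega
      have e2 : n + 1 - 2 = n - 1 := by omega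
      rwa [e1, e2] at this
    rw [show n - (m + 1) = n - 1 - m from by omega, pow_succ,
      show m + 1 + 1 = m + 2 from rfl, hJ, hL]
    linear_combination (-(2 * X)) * key
end
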